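/- If λ_max(β·A_C + (1−δ)·I_n) < 1, then the origin 0_n is a globally attracting fixed point of both mean-field dynamics: for every initial condition x^0 ∈ [0,1]^n, the iterates x^{t+1} = ψ(x^t) converge to 0_n as t → ∞, and likewise the iterates x^{t+1} = φ(x^t) converge to 0_n. -/

import Mathlib

/-!
Both maps send `[0,1]^n` into itself and are dominated there, coordinatewise, by the linear map
`M = β A_C + (1 - δ) I`: by the Weierstrass product inequality node `i` is infected with
probability at most `β ∑_{j ∈ N_i^C} x_j`, and the distancing factor `a_i(x)` lies in `[0,1]`.
As `M` has nonnegative entries, the `t`-th iterate of either map stays below `M^t x⁰`.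
For a symmetric `M` with nonnegative entries, `|vᵀ M v| ≤ |v|ᵀ M |v|`, so every eigenvalue lies in
`[-λ_max, λ_max] ⊂ (-1, 1)`, and `M^t → 0` by the spectral theorem.
-/

open Finset Filter Topology Matrix

noncomputable section

/-- Awareness information received by node `i`: a weighted combination of the fraction of
infected social-network neighbors and the global fraction of infected nodes. -/
def infoAwareness (n : ℕ) (GI : SimpleGraph (Fin n)) [DecidableRel GI.Adj]
    (α : ℝ) (x : Fin n → ℝ) (i : Fin n) : ℝ :=
  (α / ((GI.neighborFinset i).card : ℝ)) * ∑ j ∈ GI.neighborFinset i, x j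
    + ((1 - α) / (n : ℝ)) * ∑ j, x j

/-- Social distancing action of node `i`. -/
def distAction (n : ℕ) (GI : SimpleGraph (Fin n)) [DecidableRel GI.Adj]
    (α : ℝ) (x : Fin n → ℝ) (i : Fin n) : ℝ :=
  1 - infoAwareness n GI α x i

/-- Benchmark susceptible-to-infected probability `p01_i(x)`. -/
def p01Bench (n : ℕ) (GC : SimpleGraph (Fin n)) [DecidableRel GC.Adj]
    (β : ℝ) (x : Fin n → ℝ) (i : Fin n) : ℝ :=
  1 - ∏ j ∈ GC.neighborFinset i, (1 - β * x j)

/-- Distancing susceptible-to-infected probability `p01d_i(x)`. -/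
def p01Dist (n : ℕ) (GC GI : SimpleGraph (Fin n)) [DecidableRel GC.Adj] [DecidableRel GI.Adj]
    (α β : ℝ) (x : Fin n → ℝ) (i : Fin n) : ℝ :=
  1 - ∏ j ∈ GC.neighborFinset i, (1 - β * distAction n GI α x i * x j)

/-- Distancing mean-field map `φ`. -/
def phiMap (n : ℕ) (GC GI : SimpleGraph (Fin n)) [DecidableRel GC.Adj] [DecidableRel GI.Adj]
    (α β δ : ℝ) (x : Fin n → ℝ) (i : Fin n) : ℝ :=
  (1 - δ) * x i + (1 - (1 - δ) * x i) * p01Dist n GC GI α β x i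

/-- Benchmark mean-field map `ψ`. -/
def psiMap (n : ℕ) (GC : SimpleGraph (Fin n)) [DecidableRel GC.Adj]
    (β δ : ℝ) (x : Fin n → ℝ) (i : Fin n) : ℝ :=
  (1 - δ) * x i + (1 - (1 - δ) * x i) * p01Bench n GC β x i

end

theorem Finset.one_sub_prod_one_sub_le_sum {ι R : Type*} [CommRing R] [PartialOrder R]
    [IsOrderedRing R] (s : Finset ι) {a : ι → R} (h0 : ∀ i ∈ s, 0 ≤ a i)
    (h1 : ∀ i ∈ s, a i ≤ 1) : 1 - ∏ i ∈ s, (1 - a i) ≤ ∑ i ∈ s, a i := by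
  classical
  induction s using Finset.induction_on with
  | empty => simp
  | insert j s hj ih =>
    rw [sum_insert hj, prod_insert hj]
    have ih := ih (fun i hi => h0 i (mem_insert_of_mem hi)) fun i hi => h1 i (mem_insert_of_mem hi)
    have hj0 := h0 j (mem_insert_self j s)
    have hj1 := h1 j (mem_insert_self j s)
    have hprod : ∏ i ∈ s, (1 - a i) ≤ 1 :=
      prod_le_one (fun i hi => sub_nonneg.2 (h1 i (mem_insert_of_mem hi)))
        fun i hi => sub_le_self 1 (h0 i (mem_insert_of_mem hi))
    calc 1 - (1 - a j) * ∏ i ∈ s, (1 - a i)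
        = (1 - ∏ i ∈ s, (1 - a i)) + a j * ∏ i ∈ s, (1 - a i) := by ring
      _ ≤ ∑ i ∈ s, a i + a j := add_le_add ih (mul_le_of_le_one_right hj0 hprod)
      _ = a j + ∑ i ∈ s, a i := add_comm _ _

theorem Finset.one_sub_prod_one_sub_mul_mem_Icc_and_le {ι : Type*} (s : Finset ι) {c β : ℝ}
    (hc : c ∈ Set.Icc 0 β) (hβ : β ≤ 1) {x : ι → ℝ} (hx : x ∈ Set.Icc 0 1) :
    1 - ∏ j ∈ s, (1 - c * x j) ∈ Set.Icc 0 1 ∧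
      1 - ∏ j ∈ s, (1 - c * x j) ≤ β * ∑ j ∈ s, x j := by
  have hcx0 : ∀ j, 0 ≤ c * x j := fun j => mul_nonneg hc.1 (hx.1 j)
  have hcx1 : ∀ j, c * x j ≤ 1 := fun j =>
    calc c * x j ≤ β * 1 := mul_le_mul hc.2 (hx.2 j) (hx.1 j) (hc.1.trans hc.2)
      _ ≤ 1 := by linarith
  have hfac0 : ∀ j ∈ s, 0 ≤ 1 - c * x j := fun j _ => sub_nonneg.2 (hcx1 j)
  have hfac1 : ∀ j ∈ s, 1 - c * x j ≤ 1 := fun j _ => sub_le_self 1 (hcx0 j)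
  refine ⟨⟨sub_nonneg.2 (prod_le_one hfac0 hfac1), sub_le_self 1 (prod_nonneg hfac0)⟩, ?_⟩
  calc 1 - ∏ j ∈ s, (1 - c * x j) ≤ ∑ j ∈ s, c * x j :=
        s.one_sub_prod_one_sub_le_sum (fun j _ => hcx0 j) fun j _ => hcx1 j
    _ ≤ β * ∑ j ∈ s, x j := by
        rw [← mul_sum]; exact mul_le_mul_of_nonneg_right hc.2 (sum_nonneg fun j _ => hx.1 j)

theorem Finset.div_card_mul_sum_mem_Icc {ι : Type*} (s : Finset ι) {c : ℝ} (hc : 0 ≤ c)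
    {x : ι → ℝ} (hx : ∀ j ∈ s, x j ∈ Set.Icc 0 1) : c / #s * ∑ j ∈ s, x j ∈ Set.Icc 0 c := by
  have hsum : ∑ j ∈ s, x j ≤ #s := by simpa using sum_le_sum fun j hj => (hx j hj).2
  refine ⟨mul_nonneg (div_nonneg hc (Nat.cast_nonneg _)) (sum_nonneg fun j hj => (hx j hj).1), ?_⟩
  calc c / #s * ∑ j ∈ s, x j = c * ((∑ j ∈ s, x j) / #s) := by ring
    _ ≤ c * 1 := mul_le_mul_of_nonneg_left (div_le_one_of_le₀ hsum (Nat.cast_nonneg _)) hc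
    _ = c := mul_one c

namespace Matrix
variable {n : Type*} [Fintype n]

theorem abs_dotProduct_mulVec_le {R : Type*} [CommRing R] [LinearOrder R] [IsStrictOrderedRing R]
    {A : Matrix n n R} (hA : ∀ i j, 0 ≤ A i j) (x : n → R) :
    |x ⬝ᵥ A *ᵥ x| ≤ |x| ⬝ᵥ A *ᵥ |x| := by
  simp only [dotProduct, mulVec, Finset.mul_sum, Pi.abs_apply]
  refine (abs_sum_le_sum_abs _ _).trans (sum_le_sum fun i _ => ?_)
  refine (abs_sum_le_sum_abs _ _).trans (le_of_eq (sum_congr rfl fun j _ => ?_))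
  rw [abs_mul, abs_mul, abs_of_nonneg (hA i j)]

variable [DecidableEq n]

theorem IsHermitian.dotProduct_mulVec_le_of_spectrum_le {A : Matrix n n ℝ}
    (hA : A.IsHermitian) {c : ℝ} (hc : ∀ s ∈ spectrum ℝ A, s ≤ c) (x : n → ℝ) :
    x ⬝ᵥ A *ᵥ x ≤ c * (x ⬝ᵥ x) := by
  have hpsd : (c • 1 - A).PosSemidef := by
    refine posSemidef_iff_isHermitian_and_spectrum_nonneg.2 ⟨?_, fun s hs => ?_⟩
    · exact (isHermitian_one.smul (IsSelfAdjoint.all c)).sub hA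
    · rw [← Algebra.algebraMap_eq_smul_one, ← spectrum.singleton_sub_eq] at hs
      obtain ⟨_, rfl, r, hr, rfl⟩ := hs
      exact sub_nonneg.2 (hc r hr)
  simpa [sub_mulVec, dotProduct_sub, smul_mulVec] using hpsd.dotProduct_mulVec_nonneg x

theorem IsHermitian.abs_eigenvalues_le_of_nonneg {A : Matrix n n ℝ} (hA : A.IsHermitian)
    (hA0 : ∀ i j, 0 ≤ A i j) {c : ℝ} (hc : ∀ s ∈ spectrum ℝ A, s ≤ c) (i : n) :
    |hA.eigenvalues i| ≤ c := by
  set v : n → ℝ := ⇑(hA.eigenvectorBasis i)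
  have hv : v ⬝ᵥ v = 1 := by
    have := hA.eigenvectorBasis.inner_eq_one i
    rwa [EuclideanSpace.inner_eq_star_dotProduct, star_trivial] at this
  calc |hA.eigenvalues i| = |v ⬝ᵥ A *ᵥ v| := by
        rw [hA.mulVec_eigenvectorBasis, dotProduct_smul, smul_eq_mul, hv, mul_one]
    _ ≤ |v| ⬝ᵥ A *ᵥ |v| := abs_dotProduct_mulVec_le hA0 v
    _ ≤ c * (|v| ⬝ᵥ |v|) := hA.dotProduct_mulVec_le_of_spectrum_le hc |v|
    _ = c := by rw [show |v| ⬝ᵥ |v| = v ⬝ᵥ v by simp [dotProduct], hv, mul_one]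

theorem IsHermitian.tendsto_pow_atTop_nhds_zero {𝕜 : Type*} [RCLike 𝕜] {A : Matrix n n 𝕜}
    (hA : A.IsHermitian) (h : ∀ i, |hA.eigenvalues i| < 1) :
    Tendsto (fun t : ℕ => A ^ t) atTop (𝓝 0) := by
  set U : Matrix n n 𝕜 := (hA.eigenvectorUnitary : Matrix n n 𝕜)
  have hpow : ∀ t : ℕ, A ^ t = U * diagonal (fun i => (hA.eigenvalues i : 𝕜) ^ t) * star U := by
    intro t
    conv_lhs => rw [hA.spectral_theorem, ← map_pow, diagonal_pow]
    rfl
  have hdiag : Tendsto (fun t : ℕ => diagonal (fun i => (hA.eigenvalues i : 𝕜) ^ t)) atTop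
      (𝓝 (diagonal 0)) := by
    refine (continuous_id.matrix_diagonal).continuousAt.tendsto.comp (tendsto_pi_nhds.2 fun i => ?_)
    exact tendsto_pow_atTop_nhds_zero_of_norm_lt_one (by simpa using h i)
  simp_rw [hpow]
  simpa using (hdiag.const_mul U).mul_const (star U)

theorem IsHermitian.tendsto_pow_atTop_nhds_zero_of_nonneg {A : Matrix n n ℝ}
    (hA : A.IsHermitian) (hA0 : ∀ i j, 0 ≤ A i j) {c : ℝ} (hc : ∀ s ∈ spectrum ℝ A, s ≤ c)
    (hc1 : c < 1) : Tendsto (fun t : ℕ => A ^ t) atTop (𝓝 0) :=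
  hA.tendsto_pow_atTop_nhds_zero fun i => (hA.abs_eigenvalues_le_of_nonneg hA0 hc i).trans_lt hc1

end Matrix

theorem tendsto_iterate_nhds_zero_of_le_mulVec {ι : Type*} [Fintype ι] [DecidableEq ι]
    {A : Matrix ι ι ℝ} (hA0 : ∀ i j, 0 ≤ A i j) (hA : Tendsto (fun t : ℕ => A ^ t) atTop (𝓝 0))
    {S : Set (ι → ℝ)} (hS : S ⊆ Set.Ici 0) {f : (ι → ℝ) → ι → ℝ}
    (hf : ∀ x ∈ S, f x ∈ S ∧ f x ≤ A *ᵥ x) {x : ι → ℝ} (hx : x ∈ S) :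
    Tendsto (f^[·] x) atTop (𝓝 0) := by
  have hmem : ∀ t, f^[t] x ∈ S := fun t => by
    induction t with
    | zero => exact hx
    | succ t ih => rw [Function.iterate_succ_apply']; exact (hf _ ih).1
  have hle : ∀ t, f^[t] x ≤ (A ^ t) *ᵥ x := fun t => by
    induction t with
    | zero => simp
    | succ t ih =>
      rw [Function.iterate_succ_apply', pow_succ', ← mulVec_mulVec]
      exact (hf _ (hmem t)).2.trans fun i =>
        sum_le_sum fun j _ => mul_le_mul_of_nonneg_left (ih j) (hA0 i j)
  have hlim : Tendsto (fun t => (A ^ t) *ᵥ x) atTop (𝓝 0) := by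
    simpa [Function.comp_def] using
      ((continuous_id.matrix_mulVec continuous_const).tendsto (0 : Matrix ι ι ℝ)).comp hA
  exact tendsto_pi_nhds.2 fun i => squeeze_zero (fun t => hS (hmem t) i) (fun t => hle t i)
    ((continuous_apply i).tendsto _ |>.comp hlim)

namespace SimpleGraph
variable {V : Type*} (G : SimpleGraph V) [DecidableRel G.Adj]

section
variable [DecidableEq V]

theorem isHermitian_smul_adjMatrix_add_smul_one (a b : ℝ) :
    (a • G.adjMatrix ℝ + b • (1 : Matrix V V ℝ)).IsHermitian :=
  ((G.isHermitian_adjMatrix ℝ).smul (IsSelfAdjoint.all a)).add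
    (isHermitian_one.smul (IsSelfAdjoint.all b))

theorem smul_adjMatrix_add_smul_one_nonneg {a b : ℝ} (ha : 0 ≤ a) (hb : 0 ≤ b) (i j : V) :
    0 ≤ (a • G.adjMatrix ℝ + b • (1 : Matrix V V ℝ)) i j := by
  simp only [Matrix.add_apply, Matrix.smul_apply, smul_eq_mul, adjMatrix_apply, one_apply]
  split_ifs <;> positivity

end

variable [Fintype V]

/-- `c i` is the probability that node `i` catches the infection from one infected contact:
`psiMap` is the case `c ≡ β` and `phiMap` the case `c i = β a_i(x)`. -/
def meanFieldStep (δ : ℝ) (c x : V → ℝ) (i : V) : ℝ :=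
  (1 - δ) * x i + (1 - (1 - δ) * x i) * (1 - ∏ j ∈ G.neighborFinset i, (1 - c i * x j))

variable [DecidableEq V]

theorem smul_adjMatrix_add_smul_one_mulVec_apply (a b : ℝ) (x : V → ℝ) (i : V) :
    ((a • G.adjMatrix ℝ + b • (1 : Matrix V V ℝ)) *ᵥ x) i =
      b * x i + a * ∑ j ∈ G.neighborFinset i, x j := by
  simp [add_mulVec, smul_mulVec, adjMatrix_mulVec_apply, add_comm]

theorem meanFieldStep_mem_Icc_and_le_mulVec {β δ : ℝ} (hβ : β ≤ 1) (hδ : δ ∈ Set.Icc 0 1)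
    {c x : V → ℝ} (hc : ∀ i, c i ∈ Set.Icc 0 β) (hx : x ∈ Set.Icc 0 1) :
    G.meanFieldStep δ c x ∈ Set.Icc 0 1 ∧
      G.meanFieldStep δ c x ≤ (β • G.adjMatrix ℝ + (1 - δ) • (1 : Matrix V V ℝ)) *ᵥ x := by
  have key : ∀ i, G.meanFieldStep δ c x i ∈ Set.Icc 0 1 ∧
      G.meanFieldStep δ c x i ≤ (1 - δ) * x i + β * ∑ j ∈ G.neighborFinset i, x j := by
    intro i
    obtain ⟨⟨hp0, hp1⟩, hpβ⟩ :=
      (G.neighborFinset i).one_sub_prod_one_sub_mul_mem_Icc_and_le (hc i) hβ hx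
    have ha0 : 0 ≤ (1 - δ) * x i := mul_nonneg (sub_nonneg.2 hδ.2) (hx.1 i)
    have ha1 : (1 - δ) * x i ≤ 1 := mul_le_one₀ (sub_le_self 1 hδ.1) (hx.1 i) (hx.2 i)
    unfold meanFieldStep
    exact ⟨⟨by nlinarith, by nlinarith⟩, by nlinarith⟩
  refine ⟨⟨fun i => (key i).1.1, fun i => (key i).1.2⟩, fun i => ?_⟩
  rw [smul_adjMatrix_add_smul_one_mulVec_apply]
  exact (key i).2

end SimpleGraph

section MeanFieldMaps
variable {n : ℕ} {GC GI : SimpleGraph (Fin n)} [DecidableRel GC.Adj] [DecidableRel GI.Adj]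
  {α β δ : ℝ} {x : Fin n → ℝ}

theorem distAction_mem_Icc (hα : α ∈ Set.Icc 0 1) (hx : x ∈ Set.Icc 0 1) (i : Fin n) :
    distAction n GI α x i ∈ Set.Icc 0 1 := by
  have hx' : ∀ j ∈ (univ : Finset (Fin n)), x j ∈ Set.Icc 0 1 := fun j _ => ⟨hx.1 j, hx.2 j⟩
  have hsocial := (GI.neighborFinset i).div_card_mul_sum_mem_Icc hα.1 fun j _ => hx' j (mem_univ j)
  have hglobal := (univ : Finset (Fin n)).div_card_mul_sum_mem_Icc (sub_nonneg.2 hα.2) hx'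
  rw [card_univ, Fintype.card_fin] at hglobal
  unfold distAction infoAwareness
  constructor <;> linarith [hsocial.1, hsocial.2, hglobal.1, hglobal.2]

theorem psiMap_mem_Icc_and_le_mulVec (hβ : β ∈ Set.Icc 0 1) (hδ : δ ∈ Set.Icc 0 1)
    (hx : x ∈ Set.Icc 0 1) :
    psiMap n GC β δ x ∈ Set.Icc 0 1 ∧
      psiMap n GC β δ x ≤ (β • GC.adjMatrix ℝ + (1 - δ) • (1 : Matrix (Fin n) (Fin n) ℝ)) *ᵥ x :=
  GC.meanFieldStep_mem_Icc_and_le_mulVec hβ.2 hδ (fun _ => ⟨hβ.1, le_rfl⟩) hx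

theorem phiMap_mem_Icc_and_le_mulVec (hα : α ∈ Set.Icc 0 1) (hβ : β ∈ Set.Icc 0 1)
    (hδ : δ ∈ Set.Icc 0 1) (hx : x ∈ Set.Icc 0 1) :
    phiMap n GC GI α β δ x ∈ Set.Icc 0 1 ∧
      phiMap n GC GI α β δ x ≤
        (β • GC.adjMatrix ℝ + (1 - δ) • (1 : Matrix (Fin n) (Fin n) ℝ)) *ᵥ x :=
  GC.meanFieldStep_mem_Icc_and_le_mulVec hβ.2 hδ (fun i =>
    ⟨mul_nonneg hβ.1 (distAction_mem_Icc hα hx i).1,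
      mul_le_of_le_one_right hβ.1 (distAction_mem_Icc hα hx i).2⟩) hx

end MeanFieldMaps

theorem origin_globally_attracting_below_threshold_general
    (n : ℕ) (GC GI : SimpleGraph (Fin n)) [DecidableRel GC.Adj] [DecidableRel GI.Adj]
    (α β δ : ℝ) (hα : α ∈ Set.Icc (0:ℝ) 1) (hβ : β ∈ Set.Ioo (0:ℝ) 1)
    (hδ : δ ∈ Set.Ioo (0:ℝ) 1) (lam : ℝ)
    (hlam : IsGreatest
      (spectrum ℝ (β • GC.adjMatrix ℝ + (1 - δ) • (1 : Matrix (Fin n) (Fin n) ℝ))) lam)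
    (hlam1 : lam < 1) :
    ∀ x0 : Fin n → ℝ, (∀ i, x0 i ∈ Set.Icc (0:ℝ) 1) →
      Tendsto (fun t => (fun x i => psiMap n GC β δ x i)^[t] x0) atTop
        (𝓝 (0 : Fin n → ℝ)) ∧
      Tendsto (fun t => (fun x i => phiMap n GC GI α β δ x i)^[t] x0) atTop
        (𝓝 (0 : Fin n → ℝ)) := by
  intro x0 hx0
  replace hx0 : x0 ∈ Set.Icc 0 1 := ⟨fun i => (hx0 i).1, fun i => (hx0 i).2⟩
  replace hβ := Set.Ioo_subset_Icc_self hβ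
  replace hδ := Set.Ioo_subset_Icc_self hδ
  have hM0 := GC.smul_adjMatrix_add_smul_one_nonneg hβ.1 (sub_nonneg.2 hδ.2)
  have hM := (GC.isHermitian_smul_adjMatrix_add_smul_one β (1 - δ))
    |>.tendsto_pow_atTop_nhds_zero_of_nonneg hM0 hlam.2 hlam1
  exact ⟨tendsto_iterate_nhds_zero_of_le_mulVec hM0 hM Set.Icc_subset_Ici_self
      (fun x hx => psiMap_mem_Icc_and_le_mulVec hβ hδ hx) hx0,
    tendsto_iterate_nhds_zero_of_le_mulVec hM0 hM Set.Icc_subset_Ici_self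
      (fun x hx => phiMap_mem_Icc_and_le_mulVec hα hβ hδ hx) hx0⟩

open Filter Topology in
/-- if `λ_max(β·A_C + (1−δ)·I_n) < 1`, then the origin is a globally
attracting fixed point of both mean-field dynamics: from every initial condition in
`[0,1]^n` the iterates of `ψ` converge to `0`, and likewise the iterates of `φ`. -/
theorem origin_globally_attracting_below_threshold
    (n : ℕ) (hn : 0 < n) (GC GI : SimpleGraph (Fin n)) [DecidableRel GC.Adj] [DecidableRel GI.Adj]
    (hGI : ∀ i, (GI.neighborFinset i).Nonempty)
    (α β δ : ℝ) (hα : α ∈ Set.Icc (0:ℝ) 1) (hβ : β ∈ Set.Ioo (0:ℝ) 1)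
    (hδ : δ ∈ Set.Ioo (0:ℝ) 1) (lam : ℝ)
    (hlam : IsGreatest
      (spectrum ℝ (β • GC.adjMatrix ℝ + (1 - δ) • (1 : Matrix (Fin n) (Fin n) ℝ))) lam)
    (hlam1 : lam < 1) :
    ∀ x0 : Fin n → ℝ, (∀ i, x0 i ∈ Set.Icc (0:ℝ) 1) →
      Tendsto (fun t => (fun x i => psiMap n GC β δ x i)^[t] x0) atTop
        (𝓝 (0 : Fin n → ℝ)) ∧
      Tendsto (fun t => (fun x i => phiMap n GC GI α β δ x i)^[t] x0) atTop
        (𝓝 (0 : Fin n → ℝ)) :=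
  origin_globally_attracting_below_threshold_general n GC GI α β δ hα hβ hδ lam hlam hlam1
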